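/- arXiv:1203.5905 — 2 statements merged into one kernel-verified Lean document; each statement's English description precedes it below -/
import Mathlib

section
/- If B is a connected small category (its underlying undirected graph is connected and B is nonempty) and F: C → B is a functor that induces bijections between the star at c and the star at F(c) for every object c of C, and C is nonempty, then F is surjective on objects. -/
open CategoryTheory

universe w v v' v'' u u' u''

section Cov
variable {C : Type u} [Category.{v} C] {B : Type u'} [Category.{v'} B]

/-- The source star at `b`: morphisms with source `b`. -/
def SourceStar (b : B) : Type _ := Σ c : B, b ⟶ c
/-- The target star at `b`: morphisms with target `b`. -/
def TargetStar (b : B) : Type _ := Σ c : B, c ⟶ b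
/-- The star at `b`: disjoint union of the source star and the target star. -/
def CatStar (b : B) : Type _ := SourceStar b ⊕ TargetStar b

def sourceStarMap (F : C ⥤ B) (c : C) : SourceStar c → SourceStar (F.obj c) :=
  fun p => ⟨F.obj p.1, F.map p.2⟩
def targetStarMap (F : C ⥤ B) (c : C) : TargetStar c → TargetStar (F.obj c) :=
  fun p => ⟨F.obj p.1, F.map p.2⟩
/-- The map induced by `F` from the star at `c` to the star at `F.obj c`. -/
def starMap (F : C ⥤ B) (c : C) : CatStar c → CatStar (F.obj c) :=
  Sum.map (sourceStarMap F c) (targetStarMap F c)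

/-- A covering of categories: surjective on objects and bijective on stars. -/
def IsCovering (F : C ⥤ B) : Prop :=
  Function.Surjective F.obj ∧ ∀ c : C, Function.Bijective (starMap F c)

/-- A Galois covering: a covering with connected total category whose automorphism
group acts transitively on the fibres. -/
def IsGaloisCovering (F : C ⥤ B) : Prop :=
  IsCovering F ∧ IsConnected C ∧
    ∀ c c' : C, F.obj c = F.obj c' →
      ∃ H : C ⥤ C, (H ⋙ F = F) ∧ (∃ H' : C ⥤ C, H ⋙ H' = 𝟭 C ∧ H' ⋙ H = 𝟭 C) ∧ H.obj c = c'

end Cov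

/-
Since every star map of `F` is surjective, a morphism of `B` with one end in the image of
`F.obj` lifts to a morphism of `C`, so its other end is in the image too. The image is
nonempty, hence all of `B` when `B` is connected.
-/

section Surjectivity
variable {C : Type u} [Category.{v} C] {B : Type u'} [Category.{v'} B] {F : C ⥤ B}

theorem surjective_sourceStarMap_of_surjective_starMap {c : C}
    (h : Function.Surjective (starMap F c)) : Function.Surjective (sourceStarMap F c) :=
  (Sum.map_surjective.mp h).1

theorem surjective_targetStarMap_of_surjective_starMap {c : C}
    (h : Function.Surjective (starMap F c)) : Function.Surjective (targetStarMap F c) :=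
  (Sum.map_surjective.mp h).2

theorem mem_range_obj_of_hom_from {c : C} (h : Function.Surjective (sourceStarMap F c))
    {b : B} (f : F.obj c ⟶ b) : b ∈ Set.range F.obj := by
  obtain ⟨⟨c', _⟩, hc'⟩ := h ⟨b, f⟩
  exact ⟨c', congrArg Sigma.fst hc'⟩

theorem mem_range_obj_of_hom_to {c : C} (h : Function.Surjective (targetStarMap F c))
    {b : B} (f : b ⟶ F.obj c) : b ∈ Set.range F.obj := by
  obtain ⟨⟨c', _⟩, hc'⟩ := h ⟨b, f⟩
  exact ⟨c', congrArg Sigma.fst hc'⟩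

theorem surjective_obj_of_surjective_starMap [IsPreconnected B] [Nonempty C]
    (h : ∀ c : C, Function.Surjective (starMap F c)) : Function.Surjective F.obj := by
  obtain ⟨c₀⟩ := ‹Nonempty C›
  intro b
  refine induct_on_objects (Set.range F.obj) (j₀ := F.obj c₀) ⟨c₀, rfl⟩ ?_ b
  rintro b₁ b₂ f
  constructor
  · rintro ⟨c, rfl⟩
    exact mem_range_obj_of_hom_from (surjective_sourceStarMap_of_surjective_starMap (h c)) f
  · rintro ⟨c, rfl⟩
    exact mem_range_obj_of_hom_to (surjective_targetStarMap_of_surjective_starMap (h c)) f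

end Surjectivity

/-- If `B` is connected, `C` is nonempty and `F : C ⥤ B` induces bijections on stars,
then `F` is surjective on objects. -/
theorem surjective_on_objects_of_bijective_on_stars
    {C : Type u} [Category.{v} C] {B : Type u'} [Category.{v'} B]
    (F : C ⥤ B) [IsConnected B] [Nonempty C]
    (h : ∀ c : C, Function.Bijective (starMap F c)) :
    Function.Surjective F.obj :=
  surjective_obj_of_surjective_starMap fun c => (h c).2
end

section
/- Let F: C → D and G: D → B be functors with G ∘ H = F where H: C → D, F and G connected coverings of B. If H and H' are two maps of coverings from F to G (functors C → D with G∘H = F = G∘H') that agree on some object of C, then H = H'. In particular the category of pointed connected coverings of B is sharp (each hom-set has at most one element). -/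
open CategoryTheory

universe w v v' v'' u u' u''

/-
Maps of coverings lift `F` through `G`, and lifts along a covering are unique once one object is
fixed: by injectivity of `G` on the star at `H x = H' x`, the morphisms `H f` and `H' f` out of
(or into) that object have the same image under `G`, hence coincide, so the set of objects where
`H` and `H'` agree is closed under morphisms in both directions and is all of `C` by
connectedness.
-/

section StarInjective

variable {D : Type u'} [Category.{v'} D] {B : Type u''} [Category.{v''} B] {G : D ⥤ B}

lemma sourceStarMap_injective {d : D} (hG : Function.Injective (starMap G d)) :
    Function.Injective (sourceStarMap G d) :=
  fun _ _ h => Sum.inl_injective (hG (congrArg Sum.inl h))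

lemma targetStarMap_injective {d : D} (hG : Function.Injective (starMap G d)) :
    Function.Injective (targetStarMap G d) :=
  fun _ _ h => Sum.inr_injective (hG (congrArg Sum.inr h))

lemma lift_unique_of_source_eq (hG : ∀ d : D, Function.Injective (starMap G d))
    {d d' e e' : D} (hd : d = d') (g : d ⟶ e) (g' : d' ⟶ e')
    (he : G.obj e = G.obj e') (hmap : G.map g ≍ G.map g') : e = e' ∧ g ≍ g' := by
  subst hd
  have : (⟨e, g⟩ : SourceStar d) = ⟨e', g'⟩ :=
    sourceStarMap_injective (hG d) (Sigma.ext he hmap)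
  exact Sigma.mk.inj_iff.mp this

lemma lift_unique_of_target_eq (hG : ∀ d : D, Function.Injective (starMap G d))
    {d d' e e' : D} (he : e = e') (g : d ⟶ e) (g' : d' ⟶ e')
    (hd : G.obj d = G.obj d') (hmap : G.map g ≍ G.map g') : d = d' ∧ g ≍ g' := by
  subst he
  have : (⟨d, g⟩ : TargetStar e) = ⟨d', g'⟩ :=
    targetStarMap_injective (hG e) (Sigma.ext hd hmap)
  exact Sigma.mk.inj_iff.mp this

variable {C : Type u} [Category.{v} C] {H H' : C ⥤ D}

lemma obj_eq_iff_of_hom (hG : ∀ d : D, Function.Injective (starMap G d))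
    (hHH' : H ⋙ G = H' ⋙ G) {x y : C} (f : x ⟶ y) :
    H.obj x = H'.obj x ↔ H.obj y = H'.obj y :=
  ⟨fun hx => (lift_unique_of_source_eq hG hx (H.map f) (H'.map f)
      (Functor.congr_obj hHH' y) (Functor.hcongr_hom hHH' f)).1,
    fun hy => (lift_unique_of_target_eq hG hy (H.map f) (H'.map f)
      (Functor.congr_obj hHH' x) (Functor.hcongr_hom hHH' f)).1⟩

lemma functor_eq_of_comp_eq_of_obj_eq [IsPreconnected C]
    (hG : ∀ d : D, Function.Injective (starMap G d)) (hHH' : H ⋙ G = H' ⋙ G)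
    {c : C} (hc : H.obj c = H'.obj c) : H = H' := by
  have h_obj : ∀ x, H.obj x = H'.obj x :=
    induct_on_objects {x | H.obj x = H'.obj x} hc (obj_eq_iff_of_hom hG hHH')
  exact Functor.hext h_obj fun x _ f => (lift_unique_of_source_eq hG (h_obj x) (H.map f)
    (H'.map f) (Functor.congr_obj hHH' _) (Functor.hcongr_hom hHH' f)).2

end StarInjective

theorem maps_of_coverings_agreeing_on_object_eq_general
    {C : Type u} [Category.{v} C] {D : Type u'} [Category.{v'} D]
    {B : Type u''} [Category.{v''} B]
    (F : C ⥤ B) (G : D ⥤ B) (hG : IsCovering G)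
    (hCconn : IsConnected C)
    (H H' : C ⥤ D) (hH : H ⋙ G = F) (hH' : H' ⋙ G = F)
    (c : C) (hc : H.obj c = H'.obj c) : H = H' :=
  functor_eq_of_comp_eq_of_obj_eq (fun d => (hG.2 d).1) (hH.trans hH'.symm) hc

/-- Two maps of connected coverings which agree on some object are equal; in
particular the category of pointed connected coverings is sharp. -/
theorem maps_of_coverings_agreeing_on_object_eq
    {C : Type u} [Category.{v} C] {D : Type u'} [Category.{v'} D]
    {B : Type u''} [Category.{v''} B]
    (F : C ⥤ B) (G : D ⥤ B) (hF : IsCovering F) (hG : IsCovering G)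
    (hCconn : IsConnected C) (hDconn : IsConnected D)
    (H H' : C ⥤ D) (hH : H ⋙ G = F) (hH' : H' ⋙ G = F)
    (c : C) (hc : H.obj c = H'.obj c) : H = H' :=
  maps_of_coverings_agreeing_on_object_eq_general F G hG hCconn H H' hH hH' c hc
end
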